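/- Let G be a connected finite simple graph of order n ≥ 13 with degree sequence d₁ ≤ ⋯ ≤ d_n satisfying the weak Chvátal condition (for all 1 ≤ i < n/2, d_i ≥ i + 1 or d_{n−i} ≥ n − i − 1), having at most one vertex of degree 1, and with m(G,2) > 2. Let L = {v ∈ V(G) : d(v) ≥ (n−1)/2}, and let I be a set of maximum cardinality among all closures ⟨A⟩ of two-element sets A ⊆ V(G) under 2-neighbor bootstrap percolation that have nonempty intersection with L. Then |I| < n/2. -/

import Mathlib

open Finset
open scoped Classical

/-- One step of the `r`-neighbor bootstrap percolation process: all currently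
active vertices stay active, and every vertex with at least `r` active
neighbors becomes active. -/
noncomputable def bootStep {V : Type*} [Fintype V] (G : SimpleGraph V) (r : ℕ)
    (A : Finset V) : Finset V :=
  A ∪ Finset.univ.filter (fun v => r ≤ (G.neighborFinset v ∩ A).card)

/-- The closure of `A` under `r`-neighbor bootstrap percolation, i.e. `⋃ₜ Aₜ`.
Since the process is monotone on a finite vertex set, iterating `|V|` times
reaches the fixed point. -/
noncomputable def bootClosure {V : Type*} [Fintype V] (G : SimpleGraph V) (r : ℕ)
    (A : Finset V) : Finset V :=
  (bootStep G r)^[Fintype.card V] A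

/-- `G` `r`-percolates from the initially active set `A`. -/
def Percolates {V : Type*} [Fintype V] (G : SimpleGraph V) (r : ℕ)
    (A : Finset V) : Prop :=
  ∃ t : ℕ, (bootStep G r)^[t] A = Finset.univ

/-- `m(G, r)`: the minimum size of an `r`-contagious set in `G`. -/
noncomputable def minContagious {V : Type*} [Fintype V] (G : SimpleGraph V) (r : ℕ) : ℕ :=
  sInf {k : ℕ | ∃ A : Finset V, A.card = k ∧ Percolates G r A}

/-!
Suppose `n ≤ 2|I|` and put `B = Iᶜ`, `b = |B|`; `b ≥ 1` because no pair percolates. As `I` is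
closed, every vertex of `B` has at most one neighbour in `I`, so `d(w) ≤ b` on `B` and at most `b`
edges leave `I`. The recurring contradiction: if `t ∈ I` is adjacent to all of `I` and an edge `fx`
leaves `I`, the closure of `{t, f}` contains `x`, then the neighbours of `x` in `I`, then their
neighbours, and so (in each case below) all of `I` together with `f`: a larger closure meeting `L`.

The weak Chvátal condition at `i = b - 1` (and at `i = 1` or `i = b`) leaves three situations.
If `b = 1`, the vertex of `B` is pendant, and two vertices of degree `≥ n - 2` supply `t`. If `B`
has two vertices of degree `b`, they are adjacent to all of `B`, so a pair containing any `y ∈ I`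
with a neighbour in `B` has a closure containing `B`; maximality then allows no other vertex of
`I` in it, which pins down the neighbourhoods of the vertices of degree `≥ |I| - 1` in `I` enough
to find `t`. Otherwise at least `b/2 + 1` vertices of `I` have degree `≥ |I|`; each has a
neighbour in `B`, and since at most `b` edges leave `I`, two of them have exactly one, hence are
adjacent to all of `I`.
-/

lemma Finset.isFixedPt_iterate_card {α : Type*} [Fintype α] {f : Finset α → Finset α}
    (hf : ∀ s, s ⊆ f s) (A : Finset α) :
    Function.IsFixedPt f (f^[Fintype.card α] A) := by
  set N := Fintype.card α
  by_contra hne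
  have hstep : ∀ k ≤ N, f^[k] A ⊂ f^[k + 1] A := fun k hk => by
    rw [Function.iterate_succ_apply']
    refine ssubset_of_subset_of_ne (hf _) fun hfix => hne ?_
    obtain ⟨m, hm⟩ := Nat.exists_eq_add_of_le' hk
    rw [hm, Function.iterate_add_apply, Function.iterate_fixed hfix.symm]
    exact hfix.symm
  have hgrow : ∀ k ≤ N + 1, k ≤ #(f^[k] A) := by
    intro k
    induction k with
    | zero => simp
    | succ k ih =>
      intro hk
      have := card_lt_card (hstep k (by omega))
      have := ih (by omega)
      omega
  have := hgrow (N + 1) le_rfl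
  have := card_le_univ (f^[N + 1] A)
  omega

lemma two_mul_card_le_card_filter_add_sum {α : Type*} {S : Finset α} {g : α → ℕ}
    (hg : ∀ v ∈ S, 1 ≤ g v) :
    2 * #S ≤ #(S.filter (g · ≤ 1)) + ∑ v ∈ S, g v := by
  rw [card_filter, ← sum_add_distrib, mul_comm, ← smul_eq_mul, ← sum_const]
  refine sum_le_sum fun v hv => ?_
  have := hg v hv
  split_ifs <;> omega

section DegreeSequence

variable {V : Type*} [Fintype V] {n : ℕ} {d : V → ℕ}

lemma card_filter_le_le_of_lt (e : Fin n ≃ V) (hd : Monotone (d ∘ e)) (j : Fin n) {D : ℕ}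
    (hj : D < d (e j)) : #{v | d v ≤ D} ≤ j := by
  have hmaps : ∀ v ∈ ({v | d v ≤ D} : Finset V), e.symm v ∈ Iio j := fun v hv => by
    rw [mem_filter] at hv
    by_contra! hjv
    rw [mem_Iio, not_lt] at hjv
    have := hd hjv
    simp only [Function.comp_apply, Equiv.apply_symm_apply] at this
    omega
  simpa using card_le_card_of_injOn e.symm hmaps e.symm.injective.injOn

lemma sub_le_card_filter_le (e : Fin n ≃ V) (hd : Monotone (d ∘ e)) (j : Fin n) {D : ℕ}
    (hj : D ≤ d (e j)) : n - j ≤ #{v | D ≤ d v} := by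
  have hmaps : ∀ i ∈ Ici j, e i ∈ ({v | D ≤ d v} : Finset V) := fun i hi => by
    simpa using hj.trans (hd (mem_Ici.1 hi))
  have := card_le_card_of_injOn e hmaps e.injective.injOn
  rwa [Fin.card_Ici] at this

end DegreeSequence

/-- The weak Chvátal condition on `d₁ ≤ ⋯ ≤ dₙ`, read off as vertex counts: `dᵢ ≥ i + 1` says
fewer than `i` vertices have degree at most `i`, and `d_{n-i} ≥ n - i - 1` says at least `i + 1`
vertices have degree at least `n - i - 1`. -/
def WeakChvatal {V : Type*} [Fintype V] (G : SimpleGraph V) : Prop :=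
  ∀ i, 1 ≤ i → 2 * i < Fintype.card V →
    #{v | G.degree v ≤ i} < i ∨ i + 1 ≤ #{v | Fintype.card V - i - 1 ≤ G.degree v}

section Percolation

variable {V : Type*} [Fintype V] {G : SimpleGraph V} {r : ℕ} {A E I S T X : Finset V}
  {a b f t t' u v w w₁ w₂ x y z t₁ t₂ : V}

def BootClosed (G : SimpleGraph V) (r : ℕ) (X : Finset V) : Prop :=
  ∀ v ∉ X, #(G.neighborFinset v ∩ X) < r

lemma subset_bootStep : A ⊆ bootStep G r A := subset_union_left

lemma subset_bootClosure : A ⊆ bootClosure G r A := by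
  unfold bootClosure
  induction Fintype.card V with
  | zero => exact subset_rfl
  | succ k ih => exact ih.trans (by rw [Function.iterate_succ_apply']; exact subset_bootStep)

lemma bootClosed_bootClosure : BootClosed G r (bootClosure G r A) := by
  intro v hv
  by_contra! h
  apply hv
  have hfix : bootStep G r (bootClosure G r A) = bootClosure G r A :=
    isFixedPt_iterate_card (fun _ => subset_bootStep) A
  rw [← hfix]
  exact mem_union_right _ (by simpa using h)

lemma BootClosed.mem_of_adj (hX : BootClosed G 2 X) (hu : u ∈ X) (hw : w ∈ X) (huw : u ≠ w)
    (hzu : G.Adj z u) (hzw : G.Adj z w) : z ∈ X := by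
  by_contra hz
  have hsub : {u, w} ⊆ G.neighborFinset z ∩ X := by
    simp [insert_subset_iff, hu, hw, hzu, hzw]
  have := card_le_card hsub
  rw [card_pair huw] at this
  have := hX z hz
  omega

lemma card_neighborFinset_inter_add_inter_compl (G : SimpleGraph V) (X : Finset V) (v : V) :
    #(G.neighborFinset v ∩ X) + #(G.neighborFinset v ∩ Xᶜ) = G.degree v := by
  rw [← sdiff_eq_inter_compl, card_inter_add_card_sdiff, G.card_neighborFinset_eq_degree]

lemma card_neighborFinset_inter_lt (hv : v ∈ X) : #(G.neighborFinset v ∩ X) < #X := by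
  refine card_lt_card ⟨inter_subset_right, fun h => ?_⟩
  simpa using h hv

lemma card_erase_sdiff_neighborFinset_add_degree (hv : v ∈ I) :
    #(I.erase v \ G.neighborFinset v) + G.degree v + 1 = #I + #(G.neighborFinset v ∩ Iᶜ) := by
  have hinter : I.erase v ∩ G.neighborFinset v = G.neighborFinset v ∩ I := by
    ext u
    simp only [mem_inter, mem_erase, SimpleGraph.mem_neighborFinset]
    exact ⟨fun ⟨⟨_, hu⟩, hvu⟩ => ⟨hvu, hu⟩, fun ⟨hvu, hu⟩ => ⟨⟨hvu.ne.symm, hu⟩, hvu⟩⟩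
  have hsplit := card_inter_add_card_sdiff (I.erase v) (G.neighborFinset v)
  rw [hinter, card_erase_of_mem hv] at hsplit
  have := card_neighborFinset_inter_add_inter_compl G I v
  have := card_pos.2 ⟨v, hv⟩
  omega

lemma erase_subset_neighborFinset_of_le (hv : v ∈ I)
    (h : #I + #(G.neighborFinset v ∩ Iᶜ) ≤ G.degree v + 1) : I.erase v ⊆ G.neighborFinset v := by
  have := card_erase_sdiff_neighborFinset_add_degree (G := G) hv
  rw [← sdiff_eq_empty_iff_subset, ← card_eq_zero]
  omega

lemma erase_subset_neighborFinset_of_not_nonempty (hv : v ∈ I) (hdeg : #I ≤ G.degree v + 1)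
    (hout : ¬ (G.neighborFinset v ∩ Iᶜ).Nonempty) : I.erase v ⊆ G.neighborFinset v :=
  erase_subset_neighborFinset_of_le hv (by rw [not_nonempty_iff_eq_empty.1 hout, card_empty]; omega)

lemma adj_of_card_erase_sdiff_neighborFinset_le_one
    (h : #(I.erase a \ G.neighborFinset a) ≤ 1) (hb : b ∈ I) (hba : b ≠ a) (hab : ¬ G.Adj a b)
    (hu : u ∈ I) (hua : u ≠ a) (hub : u ≠ b) : G.Adj a u := by
  by_contra hau
  have hsub : {b, u} ⊆ I.erase a \ G.neighborFinset a := by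
    simp [insert_subset_iff, hb, hu, hba, hua, hab, hau]
  have := card_le_card hsub
  rw [card_pair hub.symm] at this
  omega

lemma sum_card_neighborFinset_inter_comm (G : SimpleGraph V) (S T : Finset V) :
    ∑ s ∈ S, #(G.neighborFinset s ∩ T) = ∑ t ∈ T, #(G.neighborFinset t ∩ S) := by
  have h : ∀ s S, G.neighborFinset s ∩ S = S.bipartiteAbove G.Adj s := fun s S => by
    ext; simp [bipartiteAbove, and_comm]
  simp_rw [h]
  rw [sum_card_bipartiteAbove_eq_sum_card_bipartiteBelow]
  refine sum_congr rfl fun t _ => congrArg card ?_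
  ext; simp [bipartiteBelow, G.adj_comm]

lemma BootClosed.degree_le (hX : BootClosed G 2 X) (hv : v ∉ X) : G.degree v ≤ #Xᶜ := by
  have := card_erase_sdiff_neighborFinset_add_degree (G := G) (mem_compl.2 hv)
  rw [compl_compl] at this
  have := hX v hv
  omega

lemma BootClosed.sum_card_neighborFinset_inter_compl_le (hX : BootClosed G 2 X) :
    ∑ v ∈ X, #(G.neighborFinset v ∩ Xᶜ) ≤ #Xᶜ := by
  rw [sum_card_neighborFinset_inter_comm, card_eq_sum_ones]
  exact sum_le_sum fun w hw => by have := hX w (mem_compl.1 hw); omega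

lemma BootClosed.erase_compl_subset_neighborFinset (hI : BootClosed G 2 I) (hv : v ∉ I)
    (hdeg : G.degree v = #Iᶜ) :
    Iᶜ.erase v ⊆ G.neighborFinset v ∧ ∃ x ∈ I, G.Adj v x := by
  have := card_erase_sdiff_neighborFinset_add_degree (G := G) (mem_compl.2 hv)
  rw [compl_compl] at this
  have := hI v hv
  refine ⟨?_, ?_⟩
  · rw [← sdiff_eq_empty_iff_subset, ← card_eq_zero]
    omega
  · obtain ⟨x, hx⟩ := card_pos.1 (show 0 < #(G.neighborFinset v ∩ I) by omega)
    rw [mem_inter, SimpleGraph.mem_neighborFinset] at hx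
    exact ⟨x, hx.2, hx.1⟩

/-- The vertices with `n - 1 ≤ 2 d(v)` form the set `L` of the statement. -/
structure LargestHighClosure (G : SimpleGraph V) (I : Finset V) : Prop where
  closed : BootClosed G 2 I
  exists_high : ∃ v ∈ I, Fintype.card V - 1 ≤ 2 * G.degree v
  card_le : ∀ P : Finset V, #P = 2 → ∀ v ∈ bootClosure G 2 P,
    Fintype.card V - 1 ≤ 2 * G.degree v → #(bootClosure G 2 P) ≤ #I

lemma LargestHighClosure.false_of_insert_subset (hI : LargestHighClosure G I) {P : Finset V}
    (hP : #P = 2) (hf : f ∉ I) (hsub : insert f I ⊆ bootClosure G 2 P) : False := by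
  obtain ⟨v, hvI, hv⟩ := hI.exists_high
  have h₁ := hI.card_le P hP v (hsub (mem_insert_of_mem hvI)) hv
  have h₂ := card_le_card hsub
  rw [card_insert_of_notMem hf] at h₂
  omega

lemma insert_subset_bootClosure_of_dominating (ht : t ∈ I)
    (hdom : I.erase t ⊆ G.neighborFinset t) (hx : x ∈ I) (hxt : x ≠ t) (hf : f ∉ I)
    (hfx : G.Adj f x)
    (hreach : ∀ v ∈ I, v ≠ t → v ≠ x → ¬ G.Adj v x →
      ∃ u ∈ I, u ≠ t ∧ G.Adj u x ∧ G.Adj v u) :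
    insert f I ⊆ bootClosure G 2 {t, f} := by
  -- `t` is active and adjacent to all of `I`: one more active neighbour activates a vertex of `I`
  have hE : BootClosed G 2 (bootClosure G 2 {t, f}) := bootClosed_bootClosure
  have htE : t ∈ bootClosure G 2 {t, f} := subset_bootClosure (by simp)
  have hfE : f ∈ bootClosure G 2 {t, f} := subset_bootClosure (by simp)
  have hadj : ∀ v ∈ I, v ≠ t → G.Adj v t := fun v hv hvt =>
    ((G.mem_neighborFinset _ _).1 (hdom (mem_erase.2 ⟨hvt, hv⟩))).symm
  have hxE := hE.mem_of_adj htE hfE (ne_of_mem_of_not_mem ht hf) (hadj x hx hxt) hfx.symm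
  have hnbr : ∀ v ∈ I, v ≠ t → G.Adj v x → v ∈ bootClosure G 2 {t, f} := fun v hv hvt hvx =>
    hE.mem_of_adj htE hxE hxt.symm (hadj v hv hvt) hvx
  intro v hv
  obtain rfl | hv := mem_insert.1 hv
  · exact hfE
  by_cases hvt : v = t
  · exact hvt ▸ htE
  by_cases hvx : v = x
  · exact hvx ▸ hxE
  by_cases hvx' : G.Adj v x
  · exact hnbr v hv hvt hvx'
  obtain ⟨u, huI, hut, hux, hvu⟩ := hreach v hv hvt hvx hvx'
  exact hE.mem_of_adj htE (hnbr u huI hut hux) (Ne.symm hut) (hadj v hv hvt) hvu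

lemma LargestHighClosure.false_of_dominating (hI : LargestHighClosure G I) (ht : t ∈ I)
    (hdom : I.erase t ⊆ G.neighborFinset t) (hx : x ∈ I) (hxt : x ≠ t) (hf : f ∉ I)
    (hfx : G.Adj f x)
    (hreach : ∀ v ∈ I, v ≠ t → v ≠ x → ¬ G.Adj v x →
      ∃ u ∈ I, u ≠ t ∧ G.Adj u x ∧ G.Adj v u) : False :=
  hI.false_of_insert_subset (card_pair (ne_of_mem_of_not_mem ht hf)) hf
    (insert_subset_bootClosure_of_dominating ht hdom hx hxt hf hfx hreach)

lemma LargestHighClosure.false_of_two_dominating (hI : LargestHighClosure G I) (ht : t ∈ I)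
    (ht' : t' ∈ I) (htt' : t ≠ t') (hdom : I.erase t ⊆ G.neighborFinset t)
    (hdom' : I.erase t' ⊆ G.neighborFinset t') (hx : x ∈ I) (hxt : x ≠ t) (hf : f ∉ I)
    (hfx : G.Adj f x) : False := by
  have hadj' : ∀ v ∈ I, v ≠ t' → G.Adj t' v := fun v hv hvt =>
    (G.mem_neighborFinset _ _).1 (hdom' (mem_erase.2 ⟨hvt, hv⟩))
  refine hI.false_of_dominating ht hdom hx hxt hf hfx fun v hv _ hvx hvx' => ?_
  have hxt' : x ≠ t' := fun h => hvx' (h ▸ (hadj' v hv (fun h' => hvx (h'.trans h.symm))).symm)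
  have hvt' : v ≠ t' := fun h => hvx' (h ▸ hadj' x hx hxt')
  exact ⟨t', ht', htt'.symm, hadj' x hx hxt', (hadj' v hv hvt').symm⟩

lemma BootClosed.card_mul_card_compl_le (hI : BootClosed G 2 I) (hE : BootClosed G 2 E)
    (hIE : Iᶜ ⊆ E) (hTI : T ⊆ I) (hTE : T ⊆ E) (hdeg : ∀ t ∈ T, #I ≤ G.degree t + 1) :
    #T * #Eᶜ ≤ #Eᶜ + #Iᶜ := by
  have hEI : Eᶜ ⊆ I := fun v hv => by
    by_contra h
    exact mem_compl.1 hv (hIE (mem_compl.2 h))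
  have hper : ∀ t ∈ T, #Eᶜ ≤ #(G.neighborFinset t ∩ Eᶜ) + #(G.neighborFinset t ∩ Iᶜ) := by
    intro t ht
    have hmiss := card_erase_sdiff_neighborFinset_add_degree (G := G) (hTI ht)
    have hsub : Eᶜ \ G.neighborFinset t ⊆ I.erase t \ G.neighborFinset t :=
      sdiff_subset_sdiff (fun v hv => mem_erase.2
        ⟨fun h => mem_compl.1 hv (h ▸ hTE ht), hEI hv⟩) subset_rfl
    have := card_le_card hsub
    have := card_inter_add_card_sdiff Eᶜ (G.neighborFinset t)
    rw [inter_comm] at this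
    have := hdeg t ht
    omega
  have hM : ∑ t ∈ T, #(G.neighborFinset t ∩ Eᶜ) ≤ #Eᶜ := by
    rw [sum_card_neighborFinset_inter_comm, card_eq_sum_ones]
    refine sum_le_sum fun m hm => ?_
    have := card_le_card (inter_subset_inter_left hTE : G.neighborFinset m ∩ T ⊆ _)
    have := hE m (mem_compl.1 hm)
    omega
  have hB : ∑ t ∈ T, #(G.neighborFinset t ∩ Iᶜ) ≤ #Iᶜ :=
    (sum_le_sum_of_subset hTI).trans hI.sum_card_neighborFinset_inter_compl_le
  calc #T * #Eᶜ = ∑ _t ∈ T, #Eᶜ := by rw [sum_const, smul_eq_mul]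
    _ ≤ ∑ t ∈ T, (#(G.neighborFinset t ∩ Eᶜ) + #(G.neighborFinset t ∩ Iᶜ)) := sum_le_sum hper
    _ ≤ #Eᶜ + #Iᶜ := by rw [sum_add_distrib]; omega

lemma LargestHighClosure.card_bootClosure_inter_le_one (hI : LargestHighClosure G I)
    (hb : 2 ≤ #Iᶜ) (hn : 2 * #Iᶜ < Fintype.card V)
    (hT : 3 ≤ #(I.filter (fun v => #I ≤ G.degree v + 1))) {P : Finset V} (hP : #P = 2)
    (hIP : Iᶜ ⊆ bootClosure G 2 P) : #(bootClosure G 2 P ∩ I) ≤ 1 := by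
  -- Every vertex of `T` lies in `E`, and double counting the edges from `T` to `Eᶜ ∪ Iᶜ` gives
  -- `2 |Eᶜ| ≤ |Iᶜ|`, so `E` would be larger than `I`.
  set E := bootClosure G 2 P
  set T := I.filter (fun v => #I ≤ G.degree v + 1)
  by_contra! h
  have hE : BootClosed G 2 E := bootClosed_bootClosure
  have := card_add_card_compl I
  have := card_add_card_compl E
  have hEbig : #Iᶜ + 2 ≤ #E := by
    have hsub : Iᶜ ⊆ E \ I := fun v hv => mem_sdiff.2 ⟨hIP hv, mem_compl.1 hv⟩
    have := card_le_card hsub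
    have := card_inter_add_card_sdiff E I
    omega
  have hTE : T ⊆ E := fun t ht => by
    by_contra htE
    have := hE.degree_le htE
    have := (mem_filter.1 ht).2
    omega
  have hcount : #T * #Eᶜ ≤ #Eᶜ + #Iᶜ := hI.closed.card_mul_card_compl_le hE hIP
    (filter_subset _ _) hTE fun t ht => (mem_filter.1 ht).2
  have := Nat.mul_le_mul_right #Eᶜ hT
  obtain ⟨t, ht⟩ := card_pos.1 (by omega : 0 < #T)
  have hmax : #E ≤ #I := hI.card_le P hP t (hTE ht) (by have := (mem_filter.1 ht).2; omega)
  omega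

lemma BootClosed.subset_of_subset_neighborFinset (hE : BootClosed G 2 E)
    (h₁ : w₁ ∈ E) (h₂ : w₂ ∈ E) (hw : w₁ ≠ w₂) (hS₁ : S.erase w₁ ⊆ G.neighborFinset w₁)
    (hS₂ : S.erase w₂ ⊆ G.neighborFinset w₂) : S ⊆ E := by
  intro z hz
  by_cases hz₁ : z = w₁
  · exact hz₁ ▸ h₁
  by_cases hz₂ : z = w₂
  · exact hz₂ ▸ h₂
  exact hE.mem_of_adj h₁ h₂ hw ((G.mem_neighborFinset _ _).1 (hS₁ (mem_erase.2 ⟨hz₁, hz⟩))).symm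
    ((G.mem_neighborFinset _ _).1 (hS₂ (mem_erase.2 ⟨hz₂, hz⟩))).symm

lemma exists_pair_bootClosure_superset (hw₁ : w₁ ∉ I) (hw₂ : w₂ ∉ I) (hw : w₁ ≠ w₂)
    (hfull₁ : Iᶜ.erase w₁ ⊆ G.neighborFinset w₁) (hfull₂ : Iᶜ.erase w₂ ⊆ G.neighborFinset w₂)
    (hy : y ∈ I) (hf : f ∉ I) (hyf : G.Adj y f) :
    ∃ P : Finset V, #P = 2 ∧ y ∈ bootClosure G 2 P ∧ Iᶜ ⊆ bootClosure G 2 P := by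
  have hadj : ∀ {w z}, Iᶜ.erase w ⊆ G.neighborFinset w → z ∉ I → z ≠ w → G.Adj w z :=
    fun h hz hzw => (G.mem_neighborFinset _ _).1 (h (mem_erase.2 ⟨hzw, mem_compl.2 hz⟩))
  by_cases hfw : f = w₁
  · subst hfw
    refine ⟨{y, w₂}, card_pair (ne_of_mem_of_not_mem hy hw₂), subset_bootClosure (by simp), ?_⟩
    have hE : BootClosed G 2 (bootClosure G 2 {y, w₂}) := bootClosed_bootClosure
    have hyE : y ∈ bootClosure G 2 {y, w₂} := subset_bootClosure (by simp)
    have hw₂E : w₂ ∈ bootClosure G 2 {y, w₂} := subset_bootClosure (by simp)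
    have hfE := hE.mem_of_adj hyE hw₂E (ne_of_mem_of_not_mem hy hw₂) hyf.symm
      (hadj hfull₁ hw₂ hw.symm)
    exact hE.subset_of_subset_neighborFinset hfE hw₂E hw hfull₁ hfull₂
  · refine ⟨{y, w₁}, card_pair (ne_of_mem_of_not_mem hy hw₁), subset_bootClosure (by simp), ?_⟩
    have hE : BootClosed G 2 (bootClosure G 2 {y, w₁}) := bootClosed_bootClosure
    have hyE : y ∈ bootClosure G 2 {y, w₁} := subset_bootClosure (by simp)
    have hw₁E : w₁ ∈ bootClosure G 2 {y, w₁} := subset_bootClosure (by simp)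
    have hfE := hE.mem_of_adj hyE hw₁E (ne_of_mem_of_not_mem hy hw₁) hyf.symm
      (hadj hfull₁ hf hfw).symm
    have hw₂E : w₂ ∈ bootClosure G 2 {y, w₁} := by
      by_cases hw₂f : w₂ = f
      · exact hw₂f ▸ hfE
      exact hE.mem_of_adj hw₁E hfE (Ne.symm hfw) (hadj hfull₂ hw₁ hw)
        (hadj hfull₂ hf (Ne.symm hw₂f))
    exact hE.subset_of_subset_neighborFinset hw₁E hw₂E hw hfull₁ hfull₂

lemma LargestHighClosure.false_of_two_full_of_card_eq (hI : LargestHighClosure G I)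
    (hn : Fintype.card V = 2 * #Iᶜ) (hw₁ : w₁ ∉ I) (hw₂ : w₂ ∉ I) (hw : w₁ ≠ w₂)
    (hdeg₁ : G.degree w₁ = #Iᶜ) (hdeg₂ : G.degree w₂ = #Iᶜ) : False := by
  obtain ⟨hfull₁, x, hx, hw₁x⟩ := hI.closed.erase_compl_subset_neighborFinset hw₁ hdeg₁
  obtain ⟨hfull₂, -⟩ := hI.closed.erase_compl_subset_neighborFinset hw₂ hdeg₂
  obtain ⟨P, hP, hxP, hIP⟩ :=
    exists_pair_bootClosure_superset hw₁ hw₂ hw hfull₁ hfull₂ hx hw₁ hw₁x.symm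
  have hmax := hI.card_le P hP w₁ (hIP (mem_compl.2 hw₁)) (by omega)
  have hsub : insert x Iᶜ ⊆ bootClosure G 2 P := insert_subset hxP hIP
  have := card_le_card hsub
  rw [card_insert_of_notMem (by simpa using hx)] at this
  have := card_add_card_compl I
  omega

lemma LargestHighClosure.false_of_card_filter_degree (hI : LargestHighClosure G I)
    (hS : #Iᶜ + 2 ≤ 2 * #(I.filter (fun v => #I ≤ G.degree v))) : False := by
  set S := I.filter (fun v => #I ≤ G.degree v)
  have hpos : ∀ v ∈ S, 1 ≤ #(G.neighborFinset v ∩ Iᶜ) := fun v hv => by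
    have := card_neighborFinset_inter_add_inter_compl G I v
    have := card_neighborFinset_inter_lt (G := G) (mem_filter.1 hv).1
    have := (mem_filter.1 hv).2
    omega
  have hsum : ∑ v ∈ S, #(G.neighborFinset v ∩ Iᶜ) ≤ #Iᶜ :=
    (sum_le_sum_of_subset (filter_subset _ _)).trans
      hI.closed.sum_card_neighborFinset_inter_compl_le
  have := two_mul_card_le_card_filter_add_sum hpos
  obtain ⟨v₁, hv₁, v₂, hv₂, hne⟩ := one_lt_card.1 (by omega :
    1 < #(S.filter (fun v => #(G.neighborFinset v ∩ Iᶜ) ≤ 1)))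
  have hmem : ∀ v ∈ S.filter (fun v => #(G.neighborFinset v ∩ Iᶜ) ≤ 1),
      v ∈ I ∧ I.erase v ⊆ G.neighborFinset v := fun v hv => by
    simp only [S, mem_filter] at hv
    exact ⟨hv.1.1, erase_subset_neighborFinset_of_le hv.1.1 (by omega)⟩
  obtain ⟨f, hf⟩ := card_pos.1 (hpos v₂ (mem_filter.1 hv₂).1)
  rw [mem_inter, SimpleGraph.mem_neighborFinset, mem_compl] at hf
  exact hI.false_of_two_dominating (hmem v₁ hv₁).1 (hmem v₂ hv₂).1 hne (hmem v₁ hv₁).2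
    (hmem v₂ hv₂).2 (hmem v₂ hv₂).1 hne.symm hf.2 hf.1.symm

lemma adj_of_card_neighborFinset_inter_insert_le_one (ha : a ∈ I)
    (hdeg : #I ≤ G.degree a + 1) (haB : (G.neighborFinset a ∩ Iᶜ).Nonempty) (hb : b ∈ I)
    (hab : a ≠ b) (h : #(G.neighborFinset a ∩ insert b Iᶜ) ≤ 1) (hu : u ∈ I) (hua : u ≠ a)
    (hub : u ≠ b) : G.Adj a u := by
  have hnab : ¬ G.Adj a b := fun hab' => by
    rw [inter_insert_of_mem ((G.mem_neighborFinset _ _).2 hab'),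
      card_insert_of_notMem (by simp [hb])] at h
    have := card_pos.2 haB
    omega
  rw [inter_insert_of_notMem (by simpa using hnab)] at h
  have := card_erase_sdiff_neighborFinset_add_degree (G := G) ha
  exact adj_of_card_erase_sdiff_neighborFinset_le_one (by omega) hb hab.symm hnab hu hua hub

/-- `y` is the only vertex of `I` in the closure of a pair containing `y` and `Iᶜ`, so `z` has at
most one neighbour there. -/
lemma LargestHighClosure.card_neighborFinset_inter_insert_le_one (hI : LargestHighClosure G I)
    (hb : 2 ≤ #Iᶜ) (hn : 2 * #Iᶜ < Fintype.card V)
    (hT : 3 ≤ #(I.filter (fun v => #I ≤ G.degree v + 1)))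
    (hbridge : ∀ y ∈ I, ∀ f ∉ I, G.Adj y f →
      ∃ P : Finset V, #P = 2 ∧ y ∈ bootClosure G 2 P ∧ Iᶜ ⊆ bootClosure G 2 P)
    (hy : y ∈ I) (hyB : (G.neighborFinset y ∩ Iᶜ).Nonempty) (hz : z ∈ I) (hzy : z ≠ y) :
    #(G.neighborFinset z ∩ insert y Iᶜ) ≤ 1 := by
  obtain ⟨f, hf⟩ := hyB
  rw [mem_inter, SimpleGraph.mem_neighborFinset, mem_compl] at hf
  obtain ⟨P, hP, hyP, hIP⟩ := hbridge y hy f hf.2 hf.1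
  have hone := hI.card_bootClosure_inter_le_one hb hn hT hP hIP
  have hzP : z ∉ bootClosure G 2 P := fun hzP => by
    have hsub : {y, z} ⊆ bootClosure G 2 P ∩ I := by
      simp [insert_subset_iff, hyP, hzP, hy, hz]
    have := card_le_card hsub
    rw [card_pair hzy.symm] at this
    omega
  have := bootClosed_bootClosure z hzP
  have := card_le_card (inter_subset_inter_left (insert_subset hyP hIP) :
    G.neighborFinset z ∩ insert y Iᶜ ⊆ G.neighborFinset z ∩ bootClosure G 2 P)
  omega

lemma LargestHighClosure.false_of_two_feet (hI : LargestHighClosure G I) (hI4 : 4 ≤ #I)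
    (hT : 3 ≤ #(I.filter (fun v => #I ≤ G.degree v + 1)))
    (hlonely : ∀ y ∈ I, (G.neighborFinset y ∩ Iᶜ).Nonempty → ∀ z ∈ I, z ≠ y →
      #(G.neighborFinset z ∩ insert y Iᶜ) ≤ 1)
    (ht₁ : t₁ ∈ I.filter (fun v => #I ≤ G.degree v + 1))
    (ht₂ : t₂ ∈ I.filter (fun v => #I ≤ G.degree v + 1)) (h₁₂ : t₁ ≠ t₂)
    (ht₁B : (G.neighborFinset t₁ ∩ Iᶜ).Nonempty) (ht₂B : (G.neighborFinset t₂ ∩ Iᶜ).Nonempty)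
    (hx : x ∈ I) (hf : f ∉ I) (hfx : G.Adj f x) : False := by
  -- `t₁` and `t₂` turn out to be the only vertices of `I` with a neighbour outside `I`, each
  -- adjacent to every other vertex of `I` but the other one; a third vertex of `T` dominates `I`.
  set T := I.filter (fun v => #I ≤ G.degree v + 1)
  have hadj : ∀ a ∈ T, (G.neighborFinset a ∩ Iᶜ).Nonempty → ∀ b ∈ I,
      (G.neighborFinset b ∩ Iᶜ).Nonempty → a ≠ b → ∀ u ∈ I, u ≠ a → u ≠ b → G.Adj a u :=
    fun a ha haB b hb hbB hab _ => adj_of_card_neighborFinset_inter_insert_le_one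
      (mem_filter.1 ha).1 (mem_filter.1 ha).2 haB hb hab
      (hlonely b hb hbB a (mem_filter.1 ha).1 hab)
  have hfoot : ∀ z ∈ I, (G.neighborFinset z ∩ Iᶜ).Nonempty → z = t₁ ∨ z = t₂ := by
    intro z hz hzB
    by_contra! hzt
    have h := hlonely t₁ (mem_filter.1 ht₁).1 ht₁B z hz hzt.1
    have hzt₁ := hadj t₁ ht₁ ht₁B t₂ (mem_filter.1 ht₂).1 ht₂B h₁₂ z hz hzt.1 hzt.2
    rw [inter_insert_of_mem ((G.mem_neighborFinset _ _).2 hzt₁.symm),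
      card_insert_of_notMem (by simp [(mem_filter.1 ht₁).1])] at h
    have := card_pos.2 hzB
    omega
  have hxB : (G.neighborFinset x ∩ Iᶜ).Nonempty := ⟨f, by simp [hfx.symm, hf]⟩
  obtain ⟨hxT, x', hx'T, hx'B, hxx'⟩ :
      x ∈ T ∧ ∃ x' ∈ T, (G.neighborFinset x' ∩ Iᶜ).Nonempty ∧ x ≠ x' := by
    rcases hfoot x hx hxB with rfl | rfl
    exacts [⟨ht₁, t₂, ht₂, ht₂B, h₁₂⟩, ⟨ht₂, t₁, ht₁, ht₁B, h₁₂.symm⟩]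
  have hx'I := (mem_filter.1 hx'T).1
  obtain ⟨t₀, ht₀, ht₀₁₂⟩ := exists_mem_notMem_of_card_lt_card (s := {t₁, t₂}) (t := T)
    (by have := card_le_two (a := t₁) (b := t₂); omega)
  have ht₀B : ¬ (G.neighborFinset t₀ ∩ Iᶜ).Nonempty := fun h =>
    ht₀₁₂ (by rcases hfoot t₀ (mem_filter.1 ht₀).1 h with rfl | rfl <;> simp)
  obtain ⟨u, hu, hu'⟩ := exists_mem_notMem_of_card_lt_card (s := {t₀, x, x'}) (t := I)
    (by have := card_le_three (a := t₀) (b := x) (c := x'); omega)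
  simp only [mem_insert, mem_singleton, not_or] at hu'
  refine hI.false_of_dominating (mem_filter.1 ht₀).1
    (erase_subset_neighborFinset_of_not_nonempty (mem_filter.1 ht₀).1 (mem_filter.1 ht₀).2 ht₀B)
    hx (fun h => ht₀B (h ▸ hxB)) hf hfx fun v hv _ hvx hvx' => ?_
  obtain rfl : v = x' := by
    by_contra h
    exact hvx' (hadj x hxT hxB x' hx'I hx'B hxx' v hv hvx h).symm
  exact ⟨u, hu, hu'.1, (hadj x hxT hxB v hx'I hx'B hxx' u hu hu'.2.1 hu'.2.2).symm,
    hadj v hx'T hx'B x hx hxB hxx'.symm u hu hu'.2.2 hu'.2.1⟩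

lemma LargestHighClosure.false_of_two_full (hI : LargestHighClosure G I) (hb : 2 ≤ #Iᶜ)
    (hn : 2 * #Iᶜ < Fintype.card V) (hI4 : 4 ≤ #I)
    (hT : 3 ≤ #(I.filter (fun v => #I ≤ G.degree v + 1))) (hw₁ : w₁ ∉ I) (hw₂ : w₂ ∉ I)
    (hw : w₁ ≠ w₂) (hdeg₁ : G.degree w₁ = #Iᶜ) (hdeg₂ : G.degree w₂ = #Iᶜ) : False := by
  obtain ⟨hfull₁, x, hx, hw₁x⟩ := hI.closed.erase_compl_subset_neighborFinset hw₁ hdeg₁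
  obtain ⟨hfull₂, -⟩ := hI.closed.erase_compl_subset_neighborFinset hw₂ hdeg₂
  have hlonely := fun y hy hyB z hz hzy => hI.card_neighborFinset_inter_insert_le_one hb hn hT
    (fun y hy f hf hyf => exists_pair_bootClosure_superset hw₁ hw₂ hw hfull₁ hfull₂ hy hf hyf)
    (y := y) (z := z) hy hyB hz hzy
  set T := I.filter (fun v => #I ≤ G.degree v + 1)
  by_cases hfeet : ∃ t₁ ∈ T, ∃ t₂ ∈ T, t₁ ≠ t₂ ∧ (G.neighborFinset t₁ ∩ Iᶜ).Nonempty ∧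
      (G.neighborFinset t₂ ∩ Iᶜ).Nonempty
  · obtain ⟨t₁, ht₁, t₂, ht₂, h₁₂, ht₁B, ht₂B⟩ := hfeet
    exact hI.false_of_two_feet hI4 hT hlonely ht₁ ht₂ h₁₂ ht₁B ht₂B hx hw₁ hw₁x
  have hle : #(T.filter (fun t => (G.neighborFinset t ∩ Iᶜ).Nonempty)) ≤ 1 :=
    card_le_one.2 fun a ha b hb => by
      by_contra hab
      exact hfeet ⟨a, (mem_filter.1 ha).1, b, (mem_filter.1 hb).1, hab, (mem_filter.1 ha).2,
        (mem_filter.1 hb).2⟩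
  have := card_filter_add_card_filter_not (s := T)
    (p := fun t => (G.neighborFinset t ∩ Iᶜ).Nonempty)
  obtain ⟨t, ht, t', ht', htt'⟩ := one_lt_card.1 (by omega :
    1 < #(T.filter (fun t => ¬ (G.neighborFinset t ∩ Iᶜ).Nonempty)))
  rw [mem_filter, mem_filter] at ht ht'
  exact hI.false_of_two_dominating ht.1.1 ht'.1.1 htt'
    (erase_subset_neighborFinset_of_not_nonempty ht.1.1 ht.1.2 ht.2)
    (erase_subset_neighborFinset_of_not_nonempty ht'.1.1 ht'.1.2 ht'.2)
    hx (fun h => ht.2 (h ▸ ⟨w₁, by simp [hw₁x.symm, hw₁]⟩)) hw₁ hw₁x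

lemma LargestHighClosure.false_of_pendant (hI : LargestHighClosure G I) (hw : Iᶜ = {w})
    (hx : G.neighborFinset w = {x}) (hdeg : ∀ v ∈ I, 2 ≤ G.degree v) (ht : t ∈ I) (ht' : t' ∈ I)
    (htt' : t' ≠ t) (htx : t ≠ x) (htdeg : #I ≤ G.degree t + 1) (ht'deg : #I ≤ G.degree t' + 1) :
    False := by
  have hwI : w ∉ I := mem_compl.1 (hw ▸ mem_singleton_self w)
  have hwadj : ∀ v, G.Adj v w ↔ v = x := fun v => by
    rw [G.adj_comm, ← SimpleGraph.mem_neighborFinset, hx, mem_singleton]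
  have hxI : x ∈ I := by
    by_contra h
    have := (hwadj x).2 rfl
    exact this.ne (mem_singleton.1 (hw ▸ mem_compl.2 h))
  have hdom : ∀ v ∈ I, v ≠ x → #I ≤ G.degree v + 1 → I.erase v ⊆ G.neighborFinset v :=
    fun v hv hvx hvdeg => erase_subset_neighborFinset_of_not_nonempty hv hvdeg fun ⟨u, hu⟩ => by
      rw [hw, mem_inter, mem_singleton, SimpleGraph.mem_neighborFinset] at hu
      exact hvx ((hwadj v).1 (hu.2 ▸ hu.1))
  refine hI.false_of_dominating ht (hdom t ht htx htdeg) hxI htx.symm hwI ((hwadj x).2 rfl).symm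
    fun v hv hvt hvx hvx' => ?_
  by_cases ht'x : t' = x
  · subst ht'x
    have hmiss : #(I.erase t' \ G.neighborFinset t') ≤ 1 := by
      have := card_erase_sdiff_neighborFinset_add_degree (G := G) hxI
      have := card_le_card (inter_subset_right : G.neighborFinset t' ∩ Iᶜ ⊆ Iᶜ)
      have := card_singleton w
      rw [← hw] at this
      omega
    obtain ⟨u, hu, hut⟩ := exists_mem_ne (s := G.neighborFinset v)
      (by rw [G.card_neighborFinset_eq_degree]; have := hdeg v hv; omega) t
    rw [SimpleGraph.mem_neighborFinset] at hu
    have huI : u ∈ I := by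
      by_contra h
      have huw := mem_singleton.1 (hw ▸ mem_compl.2 h)
      exact hvx ((hwadj v).1 (huw ▸ hu))
    refine ⟨u, huI, hut, ?_, hu⟩
    exact (adj_of_card_erase_sdiff_neighborFinset_le_one hmiss hv hvx (fun h => hvx' h.symm)
      huI (fun h => hvx' (h ▸ hu)) hu.ne.symm).symm
  · have ht'adj : ∀ u ∈ I, u ≠ t' → G.Adj t' u := fun u hu hut' =>
      (G.mem_neighborFinset _ _).1 (hdom t' ht' ht'x ht'deg (mem_erase.2 ⟨hut', hu⟩))
    have hvt' : v ≠ t' := fun h => hvx' (h ▸ ht'adj x hxI (Ne.symm ht'x))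
    exact ⟨t', ht', htt', ht'adj x hxI (Ne.symm ht'x), (ht'adj v hv hvt').symm⟩

lemma LargestHighClosure.false_of_card_compl_eq_one (hI : LargestHighClosure G I)
    (hconn : G.Connected) (hdeg1 : #{v | G.degree v = 1} ≤ 1) (hchv : WeakChvatal G)
    (hn : 4 ≤ Fintype.card V) (hb : #Iᶜ = 1) : False := by
  obtain ⟨w, hw⟩ := card_eq_one.1 hb
  have hwI : w ∉ I := mem_compl.1 (hw ▸ mem_singleton_self w)
  have : Nontrivial V := Fintype.one_lt_card_iff_nontrivial.1 (by omega)
  have hpos : ∀ v, 0 < G.degree v := fun v => hconn.preconnected.degree_pos_of_nontrivial v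
  have hdw : G.degree w = 1 := by
    have := hI.closed.degree_le hwI
    have := hpos w
    omega
  have hdeg2 : ∀ v ∈ I, 2 ≤ G.degree v := fun v hv => by
    by_contra h
    have := hpos v
    exact ne_of_mem_of_not_mem hv hwI
      (card_le_one.1 hdeg1 v (by simp; omega) w (by simp [hdw]))
  obtain ⟨x, hx⟩ := card_eq_one.1 ((G.card_neighborFinset_eq_degree w).trans hdw)
  have hcard := card_add_card_compl I
  have hhigh : ∀ v ∈ ({v | Fintype.card V - 1 - 1 ≤ G.degree v} : Finset V),
      v ∈ I ∧ #I ≤ G.degree v + 1 := fun v hv => by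
    rw [mem_filter] at hv
    refine ⟨?_, by omega⟩
    by_contra h
    have := hI.closed.degree_le h
    omega
  rcases hchv 1 le_rfl (by omega) with h | h
  · have := card_pos.2 (⟨w, by simp [hdw]⟩ : ({v | G.degree v ≤ 1} : Finset V).Nonempty)
    omega
  obtain ⟨t, ht, htx⟩ := exists_mem_ne h x
  obtain ⟨t', ht', htt'⟩ := exists_mem_ne h t
  exact hI.false_of_pendant hw hx hdeg2 (hhigh t ht).1 (hhigh t' ht').1 htt' htx (hhigh t ht).2
    (hhigh t' ht').2

lemma BootClosed.two_le_card_filter_degree_eq (hI : BootClosed G 2 I)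
    (h : #{v | G.degree v ≤ #Iᶜ - 1} < #Iᶜ - 1) : 2 ≤ #(Iᶜ.filter (G.degree · = #Iᶜ)) := by
  have hsub : Iᶜ.filter (¬ G.degree · = #Iᶜ) ⊆ ({v | G.degree v ≤ #Iᶜ - 1} : Finset V) :=
    fun v hv => by
    rw [mem_filter] at hv ⊢
    have := hI.degree_le (mem_compl.1 hv.1)
    exact ⟨mem_univ v, by omega⟩
  have := card_le_card hsub
  have := card_filter_add_card_filter_not (s := Iᶜ) (p := (G.degree · = #Iᶜ))
  omega

lemma LargestHighClosure.false_of_two_mul_lt (hI : LargestHighClosure G I)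
    (hchv : WeakChvatal G) (hb : 2 ≤ #Iᶜ) (hn : 2 * #Iᶜ < Fintype.card V) (hI4 : 4 ≤ #I) :
    False := by
  have hcard := card_add_card_compl I
  have hcompl : ∀ {c}, #Iᶜ < c → ({v | c ≤ G.degree v} : Finset V) ⊆ I := fun hc v hv => by
    by_contra h
    have := hI.closed.degree_le h
    have := (mem_filter.1 hv).2
    omega
  rcases hchv (#Iᶜ - 1) (by omega) (by omega) with h | h
  · obtain ⟨w₁, hw₁, w₂, hw₂, hw⟩ := one_lt_card.1 (hI.closed.two_le_card_filter_degree_eq h)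
    rw [mem_filter, mem_compl] at hw₁ hw₂
    refine hI.false_of_two_full hb hn hI4 ?_ hw₁.1 hw₂.1 hw hw₁.2 hw₂.2
    rcases (by omega : Fintype.card V = 2 * #Iᶜ + 1 ∨ 2 * #Iᶜ + 2 ≤ Fintype.card V) with hn' | hn'
    · have hsub : I.filter (fun v => ¬ #I ≤ G.degree v + 1) ⊆
          ({v | G.degree v ≤ #Iᶜ - 1} : Finset V) :=
        fun v hv => by simp only [mem_filter, mem_univ, true_and] at hv ⊢; omega
      have := card_le_card hsub
      have := card_filter_add_card_filter_not (s := I) (p := fun v => #I ≤ G.degree v + 1)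
      omega
    · rcases hchv #Iᶜ (by omega) (by omega) with h' | h'
      · have := card_le_card (s := Iᶜ) (t := {v | G.degree v ≤ #Iᶜ}) fun v hv => by
          simpa using hI.closed.degree_le (mem_compl.1 hv)
        omega
      · have hsub : ({v | Fintype.card V - #Iᶜ - 1 ≤ G.degree v} : Finset V) ⊆
            I.filter (fun v => #I ≤ G.degree v + 1) := fun v hv =>
          mem_filter.2 ⟨hcompl (by omega) hv, by have := (mem_filter.1 hv).2; omega⟩
        have := card_le_card hsub
        omega
  · have hsub : ({v | Fintype.card V - (#Iᶜ - 1) - 1 ≤ G.degree v} : Finset V) ⊆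
        I.filter (fun v => #I ≤ G.degree v) := fun v hv =>
      mem_filter.2 ⟨hcompl (by omega) hv, by have := (mem_filter.1 hv).2; omega⟩
    have := card_le_card hsub
    exact hI.false_of_card_filter_degree (by omega)

lemma LargestHighClosure.false_of_card_eq_two_mul (hI : LargestHighClosure G I)
    (hchv : WeakChvatal G) (hb : 4 ≤ #Iᶜ) (hn : Fintype.card V = 2 * #Iᶜ) : False := by
  have hcard := card_add_card_compl I
  by_cases hfull : 2 ≤ #(Iᶜ.filter (G.degree · = #Iᶜ))
  · obtain ⟨w₁, hw₁, w₂, hw₂, hw⟩ := one_lt_card.1 hfull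
    rw [mem_filter, mem_compl] at hw₁ hw₂
    exact hI.false_of_two_full_of_card_eq hn hw₁.1 hw₂.1 hw hw₁.2 hw₂.2
  rcases hchv (#Iᶜ - 1) (by omega) (by omega) with h | h
  · exact hfull (hI.closed.two_le_card_filter_degree_eq h)
  · have hsub : ({v | Fintype.card V - (#Iᶜ - 1) - 1 ≤ G.degree v} : Finset V) ⊆
        I.filter (fun v => #I ≤ G.degree v) ∪ Iᶜ.filter (G.degree · = #Iᶜ) := fun v hv => by
      have := (mem_filter.1 hv).2
      by_cases hvI : v ∈ I
      · exact mem_union_left _ (mem_filter.2 ⟨hvI, by omega⟩)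
      · have := hI.closed.degree_le hvI
        exact mem_union_right _ (mem_filter.2 ⟨mem_compl.2 hvI, by omega⟩)
    have := (card_le_card hsub).trans (card_union_le _ _)
    exact hI.false_of_card_filter_degree (by omega)

lemma bootClosure_ne_univ (hm : 2 < minContagious G 2) (hA : #A = 2) :
    bootClosure G 2 A ≠ univ := fun huniv => by
  have : minContagious G 2 ≤ 2 :=
    Nat.sInf_le (show 2 ∈ {k | ∃ A : Finset V, #A = k ∧ Percolates G 2 A} from
      ⟨A, hA, Fintype.card V, huniv⟩)
  omega

lemma largestHighClosure_bootClosure {A L : Finset V}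
    (hL : L = univ.filter (fun v => Fintype.card V - 1 ≤ 2 * G.degree v))
    (hIL : (bootClosure G 2 A ∩ L).Nonempty)
    (hImax : ∀ P : Finset V, #P = 2 → (bootClosure G 2 P ∩ L).Nonempty →
      #(bootClosure G 2 P) ≤ #(bootClosure G 2 A)) :
    LargestHighClosure G (bootClosure G 2 A) := by
  subst hL
  refine ⟨bootClosed_bootClosure, ?_, fun P hP v hv hvL => hImax P hP ⟨v, ?_⟩⟩
  · obtain ⟨v, hv⟩ := hIL
    simp only [mem_inter, mem_filter, mem_univ, true_and] at hv
    exact ⟨v, hv⟩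
  · exact mem_inter.2 ⟨hv, mem_filter.2 ⟨mem_univ v, hvL⟩⟩

end Percolation

theorem stmt13 {V : Type*} [Fintype V] (G : SimpleGraph V)
    (hconn : G.Connected)
    (n : ℕ) (hcard : Fintype.card V = n) (hn : 13 ≤ n)
    (e : Fin n ≃ V)
    (hmono : ∀ i j : Fin n, i ≤ j → G.degree (e i) ≤ G.degree (e j))
    (hchv : ∀ i : ℕ, ∀ h1 : 1 ≤ i, ∀ h2 : 2 * i < n,
      i + 1 ≤ G.degree (e ⟨i - 1, by omega⟩) ∨
      n - i - 1 ≤ G.degree (e ⟨n - i - 1, by omega⟩))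
    (hdeg1 : (Finset.univ.filter (fun v => G.degree v = 1)).card ≤ 1)
    (hm : 2 < minContagious G 2)
    (L : Finset V) (hL : L = Finset.univ.filter (fun v => n - 1 ≤ 2 * G.degree v))
    (I : Finset V)
    (hIcl : ∃ A : Finset V, A.card = 2 ∧ I = bootClosure G 2 A)
    (hIL : (I ∩ L).Nonempty)
    (hImax : ∀ A : Finset V, A.card = 2 → (bootClosure G 2 A ∩ L).Nonempty →
      (bootClosure G 2 A).card ≤ I.card) :
    2 * I.card < n := by
  subst hcard
  have hW : WeakChvatal G := by
    have hd : Monotone (fun i => G.degree (e i)) := fun i j hij => hmono i j hij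
    intro i h1 h2
    refine (hchv i h1 h2).imp (fun h => ?_) (fun h => ?_)
    · have := card_filter_le_le_of_lt (d := fun v => G.degree v) e hd _ h
      simp only at this
      omega
    · have := sub_le_card_filter_le (d := fun v => G.degree v) e hd _ h
      simp only at this
      omega
  obtain ⟨A, hA, rfl⟩ := hIcl
  have hI := largestHighClosure_bootClosure hL hIL hImax
  have hb := card_pos.2 (nonempty_iff_ne_empty.2
    (mt (compl_eq_empty_iff _).1 (bootClosure_ne_univ hm hA)))
  have := card_add_card_compl (bootClosure G 2 A)
  by_contra! hle
  rcases (by omega : #(bootClosure G 2 A)ᶜ = 1 ∨ Fintype.card V = 2 * #(bootClosure G 2 A)ᶜ ∨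
    2 ≤ #(bootClosure G 2 A)ᶜ ∧ 2 * #(bootClosure G 2 A)ᶜ < Fintype.card V) with h | h | h
  · exact hI.false_of_card_compl_eq_one hconn hdeg1 hW (by omega) h
  · exact hI.false_of_card_eq_two_mul hW (by omega) h
  · exact hI.false_of_two_mul_lt hW h.1 h.2 (by omega)
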